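/- The change of variables (x,y) ↦ (u,v) = (e/x − d, 1/(d + e·y)), where d is a fixed positive odd integer and e ∈ {±1}, preserves the measure dμ = dx dy/(1+xy)²; that is, the Jacobian determinant ∂(x,y)/∂(u,v) satisfies (1+xy)^{−2} · |∂(x,y)/∂(u,v)| = (1+uv)^{−2} at all points where the maps are defined and 1+xy ≠ 0, 1+uv ≠ 0. -/

import Mathlib

/-! The second coordinate of the map is a Möbius transformation whose denominator is
the factor `d + e y` of the Jacobian, and clearing denominators gives
`(1 + u v) · x (d + e y) = e (1 + x y)`. Since `e² = 1`, squaring this relation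
turns the density `(1 + x y)⁻²` times the Jacobian `x² (d + e y)²` into `(1 + u v)⁻²`. -/

theorem one_add_mul_mul_jacobian {K : Type*} [Field K] {d e x y : K} (hx : x ≠ 0)
    (hden : d + e * y ≠ 0) :
    (1 + (e / x - d) * (1 / (d + e * y))) * (x * (d + e * y)) = e * (1 + x * y) := by
  field_simp
  ring

theorem inv_sq_mul_sq_eq_of_mul_eq {K : Type*} [Field K] {a b j e : K} (he : e ^ 2 = 1)
    (hj : j ≠ 0) (h : a * j = e * b) : b⁻¹ ^ 2 * j ^ 2 = a⁻¹ ^ 2 := by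
  have hb : b = e * (a * j) := by rw [h, ← mul_assoc, ← sq, he, one_mul]
  rw [hb, mul_inv, mul_inv, mul_pow, mul_pow, inv_pow e, he, inv_one, one_mul, mul_assoc,
    ← mul_pow, inv_mul_cancel₀ hj, one_pow, mul_one]

theorem stmt6 (d : ℤ) (e : ℝ) (he : e = 1 ∨ e = -1)
    (x y u v : ℝ) (hx : x ≠ 0) (hden : (d:ℝ) + e*y ≠ 0)
    (hu : u = e/x - d) (hv : v = 1/((d:ℝ) + e*y)) :
    (1 + x*y)⁻¹^2 * (x^2 * ((d:ℝ) + e*y)^2) = (1 + u*v)⁻¹^2 := by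
  subst hu hv
  have he2 : e ^ 2 = 1 := by rcases he with rfl | rfl <;> norm_num
  rw [← mul_pow]
  exact inv_sq_mul_sq_eq_of_mul_eq he2 (mul_ne_zero hx hden) (one_add_mul_mul_jacobian hx hden)
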